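/- Let K be a field of characteristic 0, p_0,…,p_r ∈ K[X], and L* the operator given by L*(u)(X) = ∑_{i=0}^r p_i(X) u(X−i). Suppose σ₀ ∈ ℕ and p ∈ K[s] is a nonzero polynomial such that for every s ∈ ℕ the polynomial L*(X^s) has degree at most s+σ₀ and its coefficient of X^{s+σ₀} equals p evaluated at (the image in K of) s. Then every polynomial of K[X] lies in the sum of L*(K[X]) and the K-linear span of the monomials X^d with d ∈ ℕ such that d < σ₀ or p(d−σ₀) = 0. -/

import Mathlib

open Polynomial

/-- Weak reduction of polynomials: if `(σ₀, p)` is an indicial datum of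
`L* : u ↦ ∑_{i=0}^r p_i(X) u(X−i)` at infinity, i.e. for every `s ∈ ℕ` the polynomial
`L*(X^s)` has degree at most `s+σ₀` and coefficient `p(s)` in degree `s+σ₀`, then every
polynomial lies in the sum of `L*(K[X])` and the `K`-span of the monomials `X^d` with
`d < σ₀` or `p(d−σ₀) = 0`. -/
theorem weak_reduction_of_polynomials (K : Type*) [Field K] [CharZero K]
    (r : ℕ) (p : ℕ → Polynomial K)
    (σ₀ : ℕ) (ip : Polynomial K) (hip : ip ≠ 0)
    (hdeg : ∀ s : ℕ,
      (∑ i ∈ Finset.range (r + 1),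
        p i * (X ^ s).comp (X - C (i : K))).degree ≤ ((s + σ₀ : ℕ) : WithBot ℕ))
    (hcoeff : ∀ s : ℕ,
      (∑ i ∈ Finset.range (r + 1),
        p i * (X ^ s).comp (X - C (i : K))).coeff (s + σ₀) = ip.eval (s : K))
    (P : Polynomial K) :
    ∃ u : Polynomial K,
      ∃ w ∈ Submodule.span K { f : Polynomial K | ∃ d : ℕ,
          (d < σ₀ ∨ ip.eval (((d : ℤ) - (σ₀ : ℤ) : ℤ) : K) = 0) ∧ f = X ^ d },
        P = (∑ i ∈ Finset.range (r + 1), p i * u.comp (X - C (i : K))) + w := by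
  set L : Polynomial K → Polynomial K :=
    fun u => ∑ i ∈ Finset.range (r + 1), p i * u.comp (X - C (i : K)) with hL
  have Ladd : ∀ u v, L (u + v) = L u + L v := by
    intro u v
    simp [hL, add_comp, mul_add, Finset.sum_add_distrib]
  have Lsmul : ∀ (c : K) u, L (c • u) = c • L u := by
    intro c u
    simp [hL, smul_comp, Finset.smul_sum, mul_smul_comm]
  have key : ∀ n : ℕ, ∀ P : Polynomial K, P.degree < (n : WithBot ℕ) →
      ∃ u : Polynomial K,
      ∃ w ∈ Submodule.span K { f : Polynomial K | ∃ d : ℕ,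
          (d < σ₀ ∨ ip.eval (((d : ℤ) - (σ₀ : ℤ) : ℤ) : K) = 0) ∧ f = X ^ d },
        P = L u + w := by
    intro n
    induction n with
    | zero =>
      intro P hP
      have : P = 0 := Polynomial.degree_eq_bot.mp (Nat.WithBot.lt_zero_iff.mp (by exact_mod_cast hP))
      refine ⟨0, 0, Submodule.zero_mem _, ?_⟩
      simp [this, hL]
    | succ n ih =>
      intro P hP
      by_cases hlt : P.degree < (n : WithBot ℕ)
      · exact ih P hlt
      · have hdegP : P.degree = (n : WithBot ℕ) := le_antisymm (by exact_mod_cast Order.lt_succ_iff.mp (by exact_mod_cast hP)) (le_of_not_gt hlt)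
        have hP0 : P ≠ 0 := fun h => by simp [h] at hdegP
        have hnd : P.natDegree = n := natDegree_eq_of_degree_eq_some hdegP
        set c := P.leadingCoeff with hc
        have hc0 : c ≠ 0 := leadingCoeff_ne_zero.mpr hP0
        by_cases hcase : n < σ₀ ∨ ip.eval (((n : ℤ) - (σ₀ : ℤ) : ℤ) : K) = 0
        · -- X^n is in the span set
          have hmem : (X ^ n : Polynomial K) ∈ { f : Polynomial K | ∃ d : ℕ,
              (d < σ₀ ∨ ip.eval (((d : ℤ) - (σ₀ : ℤ) : ℤ) : K) = 0) ∧ f = X ^ d } :=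
            ⟨n, hcase, rfl⟩
          have hspan : (c • X ^ n : Polynomial K) ∈ Submodule.span K _ :=
            Submodule.smul_mem _ c (Submodule.subset_span hmem)
          have hsub : (P - c • X ^ n).degree < (n : WithBot ℕ) := by
            have := Polynomial.degree_sub_lt (q := c • X ^ n) ?_ hP0 ?_
            · rwa [hdegP] at this
            · rw [hdegP, smul_eq_C_mul, degree_C_mul (by exact hc0), degree_X_pow]
            · rw [smul_eq_C_mul, leadingCoeff_C_mul_X_pow]
          obtain ⟨u, w, hw, heq⟩ := ih _ hsub
          refine ⟨u, w + c • X ^ n, Submodule.add_mem _ hw hspan, ?_⟩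
          have : P = (P - c • X ^ n) + c • X ^ n := by ring
          rw [this, heq]; ring
        · push_neg at hcase
          obtain ⟨hσ, hipne⟩ := hcase
          set s := n - σ₀ with hs
          have hsn : s + σ₀ = n := Nat.sub_add_cancel hσ
          have hcast : (((n : ℤ) - (σ₀ : ℤ) : ℤ) : K) = (s : K) := by
            have : (n : ℤ) - (σ₀ : ℤ) = (s : ℤ) := by omega
            rw [this]; push_cast; ring
          set a := ip.eval (s : K) with ha
          have ha0 : a ≠ 0 := by rwa [hcast] at hipne
          set Q := L (X ^ s) with hQ
          have hQdeg : Q.degree ≤ (n : WithBot ℕ) := by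
            have := hdeg s; rwa [hsn] at this
          have hQc : Q.coeff n = a := by
            have := hcoeff s; rwa [hsn] at this
          have hsub : (P - (c / a) • Q).degree < (n : WithBot ℕ) := by
            rw [Polynomial.degree_lt_iff_coeff_zero]
            intro m hm
            rcases eq_or_lt_of_le (by exact_mod_cast hm : (n : ℕ) ≤ m) with rfl | h
            · have hPc : P.coeff n = c := by rw [hc, ← hnd, coeff_natDegree]
              simp [coeff_sub, hPc, coeff_smul, hQc, smul_eq_mul, div_mul_cancel₀ _ ha0]
            · have h1 : P.coeff m = 0 := coeff_eq_zero_of_degree_lt (by rw [hdegP]; exact_mod_cast h)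
              have h2 : Q.coeff m = 0 := coeff_eq_zero_of_degree_lt (lt_of_le_of_lt hQdeg (by exact_mod_cast h))
              simp [coeff_sub, h1, coeff_smul, h2]
          obtain ⟨u, w, hw, heq⟩ := ih _ hsub
          refine ⟨u + (c / a) • X ^ s, w, hw, ?_⟩
          rw [Ladd, Lsmul, ← hQ]
          have : P = (P - (c / a) • Q) + (c / a) • Q := by ring
          rw [this, heq]; ring
  obtain ⟨u, w, hw, heq⟩ := key (P.natDegree + 1) P
    (lt_of_le_of_lt degree_le_natDegree (by exact_mod_cast Nat.lt_succ_self _))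
  exact ⟨u, w, hw, heq⟩
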